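/- Let F be a field of characteristic zero and C an F-linear, idempotent complete, symmetric monoidal category. Schur-finiteness is stable under direct factors: if Y is a direct summand (retract) of an object X, and c(X^{⊗n}) = 0 for some n ≥ 1 and some nonzero idempotent c ∈ F[S_n], then also c(Y^{⊗n}) = 0; in particular, every direct summand of a Schur-finite object is Schur-finite. (Claim used in the proof of Proposition 6.1.) -/

import Mathlib

/-!
Schur-finiteness in an `F`-linear idempotent complete symmetric monoidal category,
and its preservation by `F`-linear symmetric monoidal functors.
-/

open CategoryTheory MonoidalCategory

namespace SchurFiniteness

variable {C : Type*} [Category C] [MonoidalCategory C] [BraidedCategory C]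

/-- The `n`-th tensor power of an object, right-nested:
`tpow X n = X ⊗ (X ⊗ (⋯ ⊗ 𝟙_ C))`.  Factor `0` is the leftmost one. -/
def tpow (X : C) : ℕ → C
  | 0 => 𝟙_ C
  | n + 1 => X ⊗ tpow X n

/-- The braiding of the two leftmost factors of `tpow X (n+2)`,
i.e. the action of the transposition `(0 1)`. -/
def swapFront (X : C) (n : ℕ) : tpow X (n + 2) ⟶ tpow X (n + 2) :=
  (α_ X X (tpow X n)).inv ≫ ((β_ X X).hom ▷ tpow X n) ≫ (α_ X X (tpow X n)).hom

/-- The action of the transposition `(0 p)` on `tpow X n`, defined recursively via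
`(0 (p+1)) = (0 1) ∘ (1 (p+1)) ∘ (0 1)` and the braiding. -/
def swapZero (X : C) : (n : ℕ) → Fin n → (tpow X n ⟶ tpow X n)
  | _ + 1, ⟨0, _⟩ => 𝟙 _
  | 1, ⟨_ + 1, h⟩ => absurd h (by omega)
  | n + 2, ⟨1, _⟩ => swapFront X n
  | n + 2, ⟨p + 2, h⟩ =>
      swapFront X n ≫ (X ◁ swapZero X (n + 1) ⟨p + 1, by omega⟩) ≫ swapFront X n

/-- The canonical (left) action of the symmetric group `S_n` on the `n`-th tensor power
`tpow X n`, by permutation of the factors via the symmetry isomorphisms: the factor in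
position `i` is moved to position `σ i`.  It is defined by recursion, using the
decomposition `σ = (0 (σ 0)) ∘ σ'` with `σ'` fixing `0` given by `Equiv.Perm.decomposeFin`. -/
def permAction (X : C) : (n : ℕ) → Equiv.Perm (Fin n) → (tpow X n ⟶ tpow X n)
  | 0, _ => 𝟙 _
  | n + 1, σ =>
      (X ◁ permAction X n (Equiv.Perm.decomposeFin σ).2) ≫
        swapZero X (n + 1) (Equiv.Perm.decomposeFin σ).1

variable (F : Type*) [Field F] [Preadditive C] [CategoryTheory.Linear F C]

/-- The endomorphism of `tpow X n` induced by an element `c` of the group algebra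
`F[S_n]`, i.e. the value at `c` of the `F`-linear extension of the permutation action. -/
noncomputable def schurMap (X : C) (n : ℕ)
    (c : MonoidAlgebra F (Equiv.Perm (Fin n))) : tpow X n ⟶ tpow X n :=
  Finsupp.sum c.coeff fun σ a => a • permAction X n σ

/-- An object `X` is Schur-finite if there are an integer `n ≥ 1` and a nonzero
idempotent `c ∈ F[S_n]` such that the induced idempotent endomorphism of `X^{⊗ n}`
is zero (equivalently, its image `c(X^{⊗n})` vanishes). -/
def SchurFinite (X : C) : Prop :=
  ∃ n : ℕ, 1 ≤ n ∧ ∃ c : MonoidAlgebra F (Equiv.Perm (Fin n)),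
    c ≠ 0 ∧ IsIdempotentElem c ∧ schurMap F X n c = 0

end SchurFiniteness

/-!
The permutation action on tensor powers is natural in the object: for `f : X ⟶ Y`, the map
`f^{⊗n}` intertwines the actions of every `c ∈ F[S_n]` on `X^{⊗n}` and `Y^{⊗n}`. Tensor powers
preserve retracts, so `c` acts on `Y^{⊗n}` as `i^{⊗n} ≫ c_X ≫ p^{⊗n}`, which vanishes with `c_X`.
-/

namespace SchurFiniteness

section Monoidal

variable {C : Type*} [Category C] [MonoidalCategory C]

def tpowHom {X Y : C} (f : X ⟶ Y) : (n : ℕ) → (tpow X n ⟶ tpow Y n)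
  | 0 => 𝟙 _
  | n + 1 => f ⊗ₘ tpowHom f n

lemma tpowHom_succ {X Y : C} (f : X ⟶ Y) (n : ℕ) :
    tpowHom f (n + 1) = f ⊗ₘ tpowHom f n := rfl

lemma tpowHom_id (X : C) (n : ℕ) : tpowHom (𝟙 X) n = 𝟙 (tpow X n) := by
  induction n with
  | zero => rfl
  | succ n ih => rw [tpowHom_succ, ih, id_tensorHom_id]; rfl

lemma tpowHom_comp {X Y Z : C} (f : X ⟶ Y) (g : Y ⟶ Z) (n : ℕ) :
    tpowHom f n ≫ tpowHom g n = tpowHom (f ≫ g) n := by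
  induction n with
  | zero => exact Category.comp_id _
  | succ n ih => exact (tensorHom_comp_tensorHom _ _ _ _).trans (by rw [ih]; rfl)

lemma tpowHom_succ_comp_whiskerLeft {X Y : C} (f : X ⟶ Y) {n : ℕ}
    {u : tpow Y n ⟶ tpow Y n} {v : tpow X n ⟶ tpow X n}
    (h : tpowHom f n ≫ u = v ≫ tpowHom f n) :
    tpowHom f (n + 1) ≫ (Y ◁ u) = (X ◁ v) ≫ tpowHom f (n + 1) :=
  (tensorHom_comp_whiskerLeft _ _ _).trans
    ((congrArg _ h).trans (whiskerLeft_comp_tensorHom _ _ _).symm)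

end Monoidal

section Braided

variable {C : Type*} [Category C] [MonoidalCategory C] [BraidedCategory C] {X Y : C}

lemma swapFront_natural (f : X ⟶ Y) (n : ℕ) :
    tpowHom f (n + 2) ≫ swapFront Y n = swapFront X n ≫ tpowHom f (n + 2) := by
  simp only [swapFront, tpowHom_succ, tpow, Category.assoc]
  rw [associator_inv_naturality_assoc, tensorHom_comp_whiskerRight_assoc,
    BraidedCategory.braiding_naturality, ← whiskerRight_comp_tensorHom_assoc,
    associator_naturality]

lemma swapZero_natural (f : X ⟶ Y) :
    ∀ (n : ℕ) (k : Fin n), tpowHom f n ≫ swapZero Y n k = swapZero X n k ≫ tpowHom f n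
  | _ + 1, ⟨0, _⟩ => (Category.comp_id _).trans (Category.id_comp _).symm
  | 1, ⟨_ + 1, h⟩ => absurd h (by omega)
  | n + 2, ⟨1, _⟩ => swapFront_natural f n
  | n + 2, ⟨p + 2, h⟩ =>
      (CommSq.vert_comp ⟨swapFront_natural f n⟩ (CommSq.vert_comp
        ⟨tpowHom_succ_comp_whiskerLeft f (swapZero_natural f (n + 1) ⟨p + 1, by omega⟩)⟩
        ⟨swapFront_natural f n⟩)).w

lemma permAction_natural (f : X ⟶ Y) :
    ∀ (n : ℕ) (σ : Equiv.Perm (Fin n)),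
      tpowHom f n ≫ permAction Y n σ = permAction X n σ ≫ tpowHom f n
  | 0, _ => rfl
  | n + 1, _ =>
      (CommSq.vert_comp ⟨tpowHom_succ_comp_whiskerLeft f (permAction_natural f n _)⟩
        ⟨swapZero_natural f (n + 1) _⟩).w

end Braided

def _root_.CategoryTheory.Retract.tpow {C : Type*} [Category C] [MonoidalCategory C]
    {X Y : C} (h : Retract Y X) (n : ℕ) : Retract (tpow Y n) (tpow X n) where
  i := tpowHom h.i n
  r := tpowHom h.r n
  retract := by rw [tpowHom_comp, h.retract, tpowHom_id]

section Linear

variable {C : Type*} [Category C] [MonoidalCategory C] [BraidedCategory C]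
  (F : Type*) [Field F] [Preadditive C] [Linear F C] {X Y : C}

lemma schurMap_natural (f : X ⟶ Y) (n : ℕ) (c : MonoidAlgebra F (Equiv.Perm (Fin n))) :
    tpowHom f n ≫ schurMap F Y n c = schurMap F X n c ≫ tpowHom f n := by
  simp only [schurMap, Finsupp.sum, Preadditive.comp_sum, Preadditive.sum_comp,
    Linear.comp_smul, Linear.smul_comp, permAction_natural]

lemma schurMap_eq_zero_of_retract (h : Retract Y X) {n : ℕ}
    {c : MonoidAlgebra F (Equiv.Perm (Fin n))} (hX : schurMap F X n c = 0) :
    schurMap F Y n c = 0 :=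
  calc schurMap F Y n c = (h.tpow n).i ≫ (h.tpow n).r ≫ schurMap F Y n c := by
        rw [(h.tpow n).retract_assoc]
    _ = (h.tpow n).i ≫ schurMap F X n c ≫ (h.tpow n).r := by
        rw [Retract.tpow, schurMap_natural]
    _ = 0 := by rw [hX, Limits.zero_comp, Limits.comp_zero]

lemma SchurFinite.of_retract (h : Retract Y X) (hX : SchurFinite F X) : SchurFinite F Y :=
  let ⟨n, hn, c, hc, hidem, hcX⟩ := hX
  ⟨n, hn, c, hc, hidem, schurMap_eq_zero_of_retract F h hcX⟩

end Linear

end SchurFiniteness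

open SchurFiniteness

theorem schurFinite_of_retract_general
    (F : Type*) [Field F]
    {C : Type*} [Category C] [Preadditive C] [CategoryTheory.Linear F C]
    [MonoidalCategory C] [SymmetricCategory C]
    (X Y : C) (i : Y ⟶ X) (p : X ⟶ Y) (hip : i ≫ p = 𝟙 Y) :
    (∀ (n : ℕ), 1 ≤ n → ∀ c : MonoidAlgebra F (Equiv.Perm (Fin n)),
      c ≠ 0 → IsIdempotentElem c → schurMap F X n c = 0 → schurMap F Y n c = 0) ∧
    (SchurFinite F X → SchurFinite F Y) :=
  let h : Retract Y X := ⟨i, p, hip⟩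
  ⟨fun _ _ _ _ _ => schurMap_eq_zero_of_retract F h, SchurFinite.of_retract F h⟩

/-- In an `F`-linear (`F` of characteristic zero), idempotent complete,
symmetric monoidal category, Schur-finiteness is stable under direct factors: if `Y` is a
retract of `X` (there are `i : Y ⟶ X`, `p : X ⟶ Y` with `i ≫ p = 𝟙 Y`), then for every
`n ≥ 1` and every nonzero idempotent `c ∈ F[S_n]` with `c(X^{⊗n}) = 0` we also have
`c(Y^{⊗n}) = 0`; in particular every direct summand of a Schur-finite object is
Schur-finite. -/
theorem schurFinite_of_retract
    (F : Type*) [Field F] [CharZero F]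
    {C : Type*} [Category C] [Preadditive C] [CategoryTheory.Linear F C]
    [MonoidalCategory C] [SymmetricCategory C] [IsIdempotentComplete C]
    (X Y : C) (i : Y ⟶ X) (p : X ⟶ Y) (hip : i ≫ p = 𝟙 Y) :
    (∀ (n : ℕ), 1 ≤ n → ∀ c : MonoidAlgebra F (Equiv.Perm (Fin n)),
      c ≠ 0 → IsIdempotentElem c → schurMap F X n c = 0 → schurMap F Y n c = 0) ∧
    (SchurFinite F X → SchurFinite F Y) :=
  schurFinite_of_retract_general F X Y i p hip
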